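/- arXiv:2506.02953 — 3 statements merged into one kernel-verified Lean document; each statement's English description precedes it below -/
import Mathlib

section
/- Let R be a commutative ring with identity. Then γ_t(Γ(R)) = 1 if and only if Z(R) is an annihilator ideal, i.e., there exists a ∈ Z(R)* with Z(R) = ann(a). -/
/-- Vertices of the zero-divisor graph: nonzero zero-divisors. -/
def zdVerts (R : Type*) [CommRing R] : Set R :=
  {x | x ≠ 0 ∧ ∃ y ≠ 0, x * y = 0}

/-- The set of all zero-divisors (including 0 when R is nontrivial). -/
def zdSet (R : Type*) [CommRing R] : Set R :=
  {x | ∃ y ≠ 0, x * y = 0}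

/-- A dominating set of the zero-divisor graph Γ(R) (loops allowed: `x` is
adjacent to itself iff `x^2 = 0`). -/
def IsDomSet (R : Type*) [CommRing R] (X : Set R) : Prop :=
  X ⊆ zdVerts R ∧ ∀ v ∈ zdVerts R, v ∉ X → ∃ x ∈ X, x * v = 0

/-- A total dominating set of Γ(R): every vertex has a neighbor in `X`
(possibly itself, if looped). -/
def IsTotDomSet (R : Type*) [CommRing R] (X : Set R) : Prop :=
  X ⊆ zdVerts R ∧ ∀ v ∈ zdVerts R, ∃ x ∈ X, x * v = 0

/-- The domination number γ(Γ(R)), as a cardinal. -/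
noncomputable def domNum (R : Type*) [CommRing R] : Cardinal :=
  ⨅ X : {X : Set R // IsDomSet R X}, Cardinal.mk X.1

/-- The total domination number γ_t(Γ(R)), as a cardinal. -/
noncomputable def totDomNum (R : Type*) [CommRing R] : Cardinal :=
  ⨅ X : {X : Set R // IsTotDomSet R X}, Cardinal.mk X.1

/-- The zero-divisor graph as a simple graph (loops discarded), used for girth. -/
def zdGraph (R : Type*) [CommRing R] : SimpleGraph R where
  Adj r s := r ≠ s ∧ r ≠ 0 ∧ s ≠ 0 ∧ r * s = 0
  symm := by constructor; intro r s h; exact ⟨h.1.symm, h.2.2.1, h.2.1, by rw [mul_comm]; exact h.2.2.2⟩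
  loopless := by constructor; intro r h; exact h.1 rfl

section

variable {R : Type*} [CommRing R]

theorem IsTotDomSet.nonempty {X : Set R} (hX : IsTotDomSet R X) {v : R} (hv : v ∈ zdVerts R) :
    X.Nonempty :=
  let ⟨x, hx, _⟩ := hX.2 v hv
  ⟨x, hx⟩

theorem totDomNum_le_mk {X : Set R} (hX : IsTotDomSet R X) : totDomNum R ≤ Cardinal.mk X :=
  ciInf_le' (fun X : {X : Set R // IsTotDomSet R X} => Cardinal.mk X.1) ⟨X, hX⟩

theorem totDomNum_eq_zero_of_isEmpty (h : IsEmpty {X : Set R // IsTotDomSet R X}) :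
    totDomNum R = 0 := by
  rw [totDomNum, iInf_of_isEmpty, Cardinal.sInf_empty]

theorem totDomNum_eq_one_iff : totDomNum R = 1 ↔ ∃ a, IsTotDomSet R {a} := by
  constructor
  · intro h
    rcases isEmpty_or_nonempty {X : Set R // IsTotDomSet R X} with hempty | _
    · exact absurd (totDomNum_eq_zero_of_isEmpty hempty ▸ h) zero_ne_one
    -- cardinals are well-ordered, so the infimum defining `totDomNum` is attained
    obtain ⟨⟨X, hX⟩, hXcard⟩ :=
      ciInf_mem (fun X : {X : Set R // IsTotDomSet R X} => Cardinal.mk X.1)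
    obtain ⟨a, rfl⟩ := Cardinal.mk_set_eq_one_iff.1 (hXcard.trans h)
    exact ⟨a, hX⟩
  · rintro ⟨a, ha⟩
    have ha_vert : a ∈ zdVerts R := ha.1 rfl
    have : Nonempty {X : Set R // IsTotDomSet R X} := ⟨⟨{a}, ha⟩⟩
    refine le_antisymm (by simpa using totDomNum_le_mk ha) (le_ciInf fun X => ?_)
    exact Cardinal.one_le_iff_ne_zero.2 <|
      Cardinal.mk_ne_zero_iff.2 (X.2.nonempty ha_vert).to_subtype

theorem isTotDomSet_singleton_iff {a : R} :
    IsTotDomSet R {a} ↔ a ∈ zdVerts R ∧ {x : R | a * x = 0} = zdSet R := by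
  simp only [IsTotDomSet, Set.singleton_subset_iff, Set.mem_singleton_iff, exists_eq_left]
  refine and_congr_right fun ha =>
    ⟨fun hdom => ?_, fun hann v hv => (Set.ext_iff.1 hann v).2 hv.2⟩
  ext x
  refine ⟨fun hx => ⟨a, ha.1, by rwa [mul_comm]⟩, fun hx => ?_⟩
  by_cases hx0 : x = 0
  · simp [hx0]
  · exact hdom x ⟨hx0, hx⟩

end

theorem stmt_5 (R : Type*) [CommRing R] :
    totDomNum R = 1 ↔ ∃ a ∈ zdVerts R, {x : R | a * x = 0} = zdSet R := by
  simp only [totDomNum_eq_one_iff, isTotDomSet_singleton_iff]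
end

section
/- Let R be a commutative ring. If γ_t(Γ(R)) ≥ 3, then the girth of Γ(R) is 3 (i.e., Γ(R) contains a 3-cycle). -/
/-
Since `γ_t ≥ 3`, for any vertices `a, b` the pair `{a, b}` is not totally dominating, so some
vertex `v` has `av ≠ 0` and `bv ≠ 0`.  If `R` is reduced, apply this to an edge `p — q` and pick
`w ≠ 0` with `vw = 0`: then `pv, qv, w` is a triangle, where `pv ≠ qv` because
`(pv)² = pv · qv = 0`.  Otherwise take `a ≠ 0` with `a² = 0`; all products in `aR` vanish.  Either
`aR` contains an element `ax ∉ {0, a, -a}`, giving the triangle `a, ax, a + ax`, or `a = ±av`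
whenever `av ≠ 0`, so `ann(v) ⊆ ann(a)`, and two applications of non-domination produce a
triangle through `a` inside `ann(a)`.
-/

theorem SimpleGraph.egirth_eq_three_of_adj {V : Type*} {G : SimpleGraph V} {x y z : V}
    (hxy : G.Adj x y) (hxz : G.Adj x z) (hyz : G.Adj y z) : G.egirth = 3 := by
  classical
  obtain ⟨u, w, hw, hlen⟩ := G.is3Clique_iff_exists_cycle_length_three.mp
    ⟨_, G.is3Clique_triple_iff.mpr ⟨hxy, hxz, hyz⟩⟩
  refine le_antisymm ?_ G.three_le_egirth
  simpa [hlen] using G.egirth_le_length hw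

/-- No two vertices of `Γ(R)` form a total dominating set. -/
def NoDominatingPair (R : Type*) [CommRing R] : Prop :=
  ∀ a ∈ zdVerts R, ∀ b ∈ zdVerts R, ∃ v ∈ zdVerts R, a * v ≠ 0 ∧ b * v ≠ 0

section

variable {R : Type*} [CommRing R]

theorem zdVerts_nonempty_of_three_le_totDomNum (h : 3 ≤ totDomNum R) :
    (zdVerts R).Nonempty := by
  by_contra hempty
  rw [Set.not_nonempty_iff_eq_empty] at hempty
  have hX : IsTotDomSet R ∅ := ⟨Set.empty_subset _, by simp [hempty]⟩
  have := h.trans (totDomNum_le_mk hX)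
  simp at this

theorem noDominatingPair_of_three_le_totDomNum (h : 3 ≤ totDomNum R) : NoDominatingPair R := by
  intro a ha b hb
  by_contra! hdom
  have hX : IsTotDomSet R {a, b} := by
    refine ⟨Set.insert_subset ha (Set.singleton_subset_iff.mpr hb), fun v hv => ?_⟩
    by_cases hav : a * v = 0
    · exact ⟨a, Set.mem_insert _ _, hav⟩
    · exact ⟨b, Set.mem_insert_of_mem _ rfl, hdom v hv hav⟩
  have hcard : Cardinal.mk ({a, b} : Set R) ≤ 2 :=
    calc Cardinal.mk ({a, b} : Set R) ≤ Cardinal.mk ({b} : Set R) + 1 := Cardinal.mk_insert_le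
      _ = 2 := by rw [Cardinal.mk_singleton]; norm_num
  have := h.trans ((totDomNum_le_mk hX).trans hcard)
  norm_num at this

namespace zdGraph

theorem egirth_eq_three_of_mul_eq_zero {x y z : R} (hx : x ≠ 0) (hy : y ≠ 0) (hz : z ≠ 0)
    (hxy : x ≠ y) (hxz : x ≠ z) (hyz : y ≠ z)
    (mxy : x * y = 0) (mxz : x * z = 0) (myz : y * z = 0) : (zdGraph R).egirth = 3 :=
  SimpleGraph.egirth_eq_three_of_adj (G := zdGraph R) ⟨hxy, hx, hy, mxy⟩ ⟨hxz, hx, hz, mxz⟩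
    ⟨hyz, hy, hz, myz⟩

theorem egirth_eq_three_of_isReduced [IsReduced R] (hR : NoDominatingPair R)
    (hne : (zdVerts R).Nonempty) : (zdGraph R).egirth = 3 := by
  obtain ⟨p, hp, q, hq, hpq⟩ := hne
  have hpV : p ∈ zdVerts R := ⟨hp, q, hq, hpq⟩
  have hqV : q ∈ zdVerts R := ⟨hq, p, hp, by rw [mul_comm, hpq]⟩
  obtain ⟨v, ⟨-, w, hw, hvw⟩, hpv, hqv⟩ := hR p hpV q hqV
  have hsq : ∀ x : R, x ≠ 0 → x ^ 2 ≠ 0 := fun x hx hx2 => hx (IsReduced.eq_zero x ⟨2, hx2⟩)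
  refine egirth_eq_three_of_mul_eq_zero hpv hqv hw ?_ ?_ ?_
    (by linear_combination v ^ 2 * hpq) (by linear_combination p * hvw)
    (by linear_combination q * hvw)
  · intro h
    exact hsq _ hpv (by linear_combination (p * v) * h + v ^ 2 * hpq)
  · rintro rfl
    exact hsq _ hpv (by linear_combination p * hvw)
  · rintro rfl
    exact hsq _ hqv (by linear_combination q * hvw)

theorem egirth_eq_three_of_sq_eq_zero_of_mul_eq_zero {a m : R} (ha : a ≠ 0) (hm : m ≠ 0)
    (ha2 : a ^ 2 = 0) (hm2 : m ^ 2 = 0) (ham : a * m = 0) (hma : m ≠ a) (hma' : m ≠ -a) :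
    (zdGraph R).egirth = 3 := by
  refine egirth_eq_three_of_mul_eq_zero (x := a) (y := m) (z := a + m) ha hm ?_ hma.symm ?_ ?_
    ham (by linear_combination ha2 + ham) (by linear_combination ham + hm2)
  · intro h; exact hma' (by linear_combination h)
  · intro h; exact hm (by linear_combination -h)
  · intro h; exact ha (by linear_combination -h)

theorem egirth_eq_three_of_sq_eq_zero (hR : NoDominatingPair R) {a : R} (ha : a ≠ 0)
    (ha2 : a ^ 2 = 0) : (zdGraph R).egirth = 3 := by
  by_cases hmul : ∃ x, a * x ≠ 0 ∧ a * x ≠ a ∧ a * x ≠ -a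
  · obtain ⟨x, h0, h1, h2⟩ := hmul
    exact egirth_eq_three_of_sq_eq_zero_of_mul_eq_zero ha h0 ha2
      (by linear_combination x ^ 2 * ha2) (by linear_combination x * ha2) h1 h2
  push Not at hmul
  have ann_le : ∀ v y : R, a * v ≠ 0 → v * y = 0 → a * y = 0 := by
    intro v y hav hvy
    by_cases h : a * v = a
    · rw [← h, mul_assoc, hvy, mul_zero]
    · linear_combination y * hmul v hav h - a * hvy
  have haV : a ∈ zdVerts R := ⟨ha, a, ha, by rw [← sq, ha2]⟩
  obtain ⟨v, ⟨-, w, hw, hvw⟩, hav, -⟩ := hR a haV a haV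
  have haw := ann_le v w hav hvw
  obtain ⟨u, ⟨-, m, hm, hum⟩, hau, hwu⟩ :=
    hR a haV w ⟨hw, a, ha, by rw [mul_comm, haw]⟩
  have ham := ann_le u m hau hum
  have hwua : w * u ≠ a := by
    intro h; apply hav; rw [← h]; linear_combination u * hvw
  have hma : m ≠ a := by
    rintro rfl; apply hau; linear_combination hum
  have hma' : m ≠ -a := by
    rintro rfl; apply hau; linear_combination -hum
  by_cases hwum : w * u = m
  · subst hwum
    exact egirth_eq_three_of_sq_eq_zero_of_mul_eq_zero ha hwu ha2
      (by linear_combination w * hum) ham hma hma'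
  · exact egirth_eq_three_of_mul_eq_zero ha hwu hm hwua.symm hma.symm hwum
      (by linear_combination u * haw) ham (by linear_combination w * hum)

end zdGraph

end

theorem stmt_9 (R : Type*) [CommRing R] (h : 3 ≤ totDomNum R) :
    (zdGraph R).egirth = 3 := by
  have hR := noDominatingPair_of_three_le_totDomNum h
  by_cases hred : IsReduced R
  · exact zdGraph.egirth_eq_three_of_isReduced hR (zdVerts_nonempty_of_three_le_totDomNum h)
  · obtain ⟨a, ha2, ha⟩ : ∃ a : R, a ^ 2 = 0 ∧ a ≠ 0 := by
      simpa [isReduced_iff_pow_one_lt 2 one_lt_two] using hred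
    exact zdGraph.egirth_eq_three_of_sq_eq_zero hR ha ha2
end

section
/- Let R be a commutative ring. If the girth of Γ(R) is 4 or ∞, then either γ_t(Γ(R)) = γ(Γ(R)) or R ≅ Z₂ × D for some domain D. -/
open Cardinal

lemma SimpleGraph.cliqueFree_three_of_three_lt_egirth {α : Type*} {G : SimpleGraph α}
    (h : 3 < G.egirth) : G.CliqueFree 3 := by
  classical
  intro s hs
  obtain ⟨a, b, c, hab, hac, hbc, -⟩ := SimpleGraph.is3Clique_iff.mp hs
  let w : G.Walk a a := .cons hab (.cons hbc (.cons hac.symm .nil))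
  have hw : w.IsCycle :=
    { edges_nodup := by aesop (add safe forward SimpleGraph.Adj.ne)
      ne_nil := by simp [w]
      support_nodup := by aesop (add safe forward SimpleGraph.Adj.ne) }
  exact absurd (G.egirth_le_length hw) (by simpa [w] using h)

section Domination

variable {R : Type*} [CommRing R]

lemma IsTotDomSet.isDomSet {X : Set R} (hX : IsTotDomSet R X) : IsDomSet R X :=
  ⟨hX.1, fun v hv _ => hX.2 v hv⟩

lemma isTotDomSet_pair {a b : R} (ha : a ∈ zdVerts R) (hb : b ∈ zdVerts R)
    (hcover : ∀ v ∈ zdVerts R, a * v = 0 ∨ b * v = 0) : IsTotDomSet R {a, b} := by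
  refine ⟨Set.insert_subset ha (Set.singleton_subset_iff.mpr hb), fun v hv => ?_⟩
  rcases hcover v hv with h | h
  exacts [⟨a, Set.mem_insert a _, h⟩, ⟨b, Set.mem_insert_of_mem a rfl, h⟩]

lemma IsDomSet.nonempty {Y : Set R} (hY : IsDomSet R Y) {x : R} (hx : x ∈ zdVerts R) :
    Y.Nonempty := by
  by_cases hxY : x ∈ Y
  · exact ⟨x, hxY⟩
  · obtain ⟨w, hw, -⟩ := hY.2 x hx hxY
    exact ⟨w, hw⟩

lemma IsDomSet.nontrivial {Y : Set R} (hY : IsDomSet R Y) (hV : (zdVerts R).Nonempty)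
    (hND : ∀ x ∈ zdVerts R, ∃ v ∈ zdVerts R, v ≠ x ∧ x * v ≠ 0) : Y.Nontrivial := by
  obtain ⟨x, hxY⟩ := hY.nonempty hV.some_mem
  obtain ⟨v, hv, hvx, hxv⟩ := hND x (hY.1 hxY)
  by_cases hvY : v ∈ Y
  · exact ⟨x, hxY, v, hvY, hvx.symm⟩
  · obtain ⟨w, hwY, hwv⟩ := hY.2 v hv hvY
    exact ⟨x, hxY, w, hwY, fun hxw => hxv (hxw ▸ hwv)⟩

lemma totDomNum_eq_domNum_of_isTotDomSet {X : Set R} (hX : IsTotDomSet R X)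
    (hmin : ∀ Y, IsDomSet R Y → #X ≤ #Y) : totDomNum R = domNum R := by
  have : Nonempty {Y : Set R // IsDomSet R Y} := ⟨⟨X, hX.isDomSet⟩⟩
  have : Nonempty {Y : Set R // IsTotDomSet R Y} := ⟨⟨X, hX⟩⟩
  refine le_antisymm ?_ (le_ciInf fun Y => ?_)
  · exact (ciInf_le' (fun Y : {Y // IsTotDomSet R Y} => #Y.1) ⟨X, hX⟩).trans
      (le_ciInf fun Y => hmin Y.1 Y.2)
  · exact ciInf_le' (fun Y : {Y // IsDomSet R Y} => #Y.1) ⟨Y.1, Y.2.isDomSet⟩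

lemma totDomNum_eq_domNum_of_zdVerts_eq_empty (h : zdVerts R = ∅) :
    totDomNum R = domNum R := by
  refine totDomNum_eq_domNum_of_isTotDomSet (X := ∅) ⟨Set.empty_subset _, by simp [h]⟩ ?_
  simp

lemma totDomNum_eq_domNum_of_mul_self_eq_zero {x : R} (hx : x ∈ zdVerts R)
    (hdom : ∀ v ∈ zdVerts R, v ≠ x → x * v = 0) (hx2 : x * x = 0) :
    totDomNum R = domNum R := by
  refine totDomNum_eq_domNum_of_isTotDomSet (X := {x}) ⟨by simpa using hx, fun v hv => ?_⟩
    fun Y hY => ?_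
  · obtain rfl | hvx := eq_or_ne v x
    exacts [⟨v, rfl, hx2⟩, ⟨x, rfl, hdom v hv hvx⟩]
  · rw [mk_singleton, Cardinal.one_le_iff_ne_zero, mk_ne_zero_iff]
    exact (hY.nonempty hx).to_subtype

lemma totDomNum_eq_domNum_of_isTotDomSet_pair {a b : R} (hab : IsTotDomSet R {a, b})
    (hND : ∀ x ∈ zdVerts R, ∃ v ∈ zdVerts R, v ≠ x ∧ x * v ≠ 0) :
    totDomNum R = domNum R := by
  refine totDomNum_eq_domNum_of_isTotDomSet hab fun Y hY => ?_
  obtain ⟨x, hx, y, hy, hxy⟩ := hY.nontrivial ⟨a, hab.1 (Set.mem_insert a _)⟩ hND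
  calc #({a, b} : Set R) ≤ #({b} : Set R) + 1 := mk_insert_le
    _ = 2 := by rw [mk_singleton, one_add_one_eq_two]
    _ ≤ #Y := two_le_iff.mpr ⟨⟨x, hx⟩, ⟨y, hy⟩, fun h => hxy (congrArg Subtype.val h)⟩

end Domination

lemma ne_of_mul_ne_zero_of_mul_eq_zero {M : Type*} [Mul M] [Zero M] {c p q : M}
    (hp : c * p ≠ 0) (hq : c * q = 0) : p ≠ q :=
  fun h => hp (h ▸ hq)

section Triangles

variable {R : Type*} [CommRing R]

lemma mul_ne_zero_of_cliqueFree (hT : (zdGraph R).CliqueFree 3) {x y z : R}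
    (hx : x ≠ 0) (hy : y ≠ 0) (hz : z ≠ 0) (hxy : x ≠ y) (hxz : x ≠ z) (hyz : y ≠ z)
    (h1 : x * y = 0) (h2 : x * z = 0) : y * z ≠ 0 := by
  classical
  exact fun h3 => hT {x, y, z} (SimpleGraph.is3Clique_triple_iff.mpr
    ⟨⟨hxy, hx, hy, h1⟩, ⟨hxz, hx, hz, h2⟩, ⟨hyz, hy, hz, h3⟩⟩)

lemma mul_eq_zero_or_mul_eq_zero_of_forall_mul_self_ne_zero (hT : (zdGraph R).CliqueFree 3)
    (hred : ∀ n : R, n ≠ 0 → n * n ≠ 0) {x y : R} (hxy : x * y = 0) {v : R}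
    (hv : v ∈ zdVerts R) : x * v = 0 ∨ y * v = 0 := by
  by_contra! h
  obtain ⟨-, t, ht0, hvt⟩ := hv
  have hvx : v * x ≠ 0 := by rw [mul_comm]; exact h.1
  have hvy : v * y ≠ 0 := by rw [mul_comm]; exact h.2
  have htx : t * (v * x) = 0 := by linear_combination x * hvt
  have hty : t * (v * y) = 0 := by linear_combination y * hvt
  have hxy' : (v * x) * (v * y) = 0 := by linear_combination (v * v) * hxy
  -- an annihilator `t` of `v` would form a triangle with `v * x` and `v * y`
  refine mul_ne_zero_of_cliqueFree hT ht0 hvx hvy ?_ ?_ ?_ htx hty hxy'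
  · exact fun h => hred _ hvx (h ▸ htx)
  · exact fun h => hred _ hvy (h ▸ hty)
  · exact fun h => hred _ hvy (h ▸ hxy')

end Triangles

section SquareZero

variable {R : Type*} [CommRing R] {a : R}

lemma eq_or_eq_neg_of_mul_self_eq_zero (hT : (zdGraph R).CliqueFree 3) (ha0 : a ≠ 0)
    (ha2 : a * a = 0) {w : R} (hw0 : w ≠ 0) (hw2 : w * w = 0) (haw : a * w = 0) :
    w = a ∨ w = -a := by
  by_contra! h
  have hs : a + w ≠ 0 := fun hs => h.2 (by linear_combination hs)
  refine mul_ne_zero_of_cliqueFree hT ha0 hw0 hs (Ne.symm h.1) (fun e => hw0 ?_)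
    (fun e => ha0 ?_) haw (by linear_combination ha2 + haw) (by linear_combination haw + hw2)
  · linear_combination -e
  · linear_combination -e

lemma mul_eq_or_eq_neg_of_mul_ne_zero (hT : (zdGraph R).CliqueFree 3) (ha0 : a ≠ 0)
    (ha2 : a * a = 0) {v : R} (hva : v * a ≠ 0) : v * a = a ∨ v * a = -a :=
  eq_or_eq_neg_of_mul_self_eq_zero hT ha0 ha2 hva (by linear_combination (v * v) * ha2)
    (by linear_combination v * ha2)

lemma mul_eq_zero_of_mul_ne_zero (hT : (zdGraph R).CliqueFree 3) (ha0 : a ≠ 0)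
    (ha2 : a * a = 0) {v t : R} (hva : v * a ≠ 0) (hvt : v * t = 0) : a * t = 0 := by
  rcases mul_eq_or_eq_neg_of_mul_ne_zero hT ha0 ha2 hva with h | h
  · linear_combination (-t) * h + a * hvt
  · linear_combination t * h - a * hvt

lemma add_self_eq_zero_of_mul_self_eq_zero (hT : (zdGraph R).CliqueFree 3) (ha0 : a ≠ 0)
    (ha2 : a * a = 0) (hND : ∃ v ∈ zdVerts R, a * v ≠ 0) : a + a = 0 := by
  obtain ⟨p, ⟨-, t, ht0, hpt⟩, hap⟩ := hND
  have hpa : p * a ≠ 0 := by rwa [mul_comm]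
  have hat := mul_eq_zero_of_mul_ne_zero hT ha0 ha2 hpa hpt
  by_contra h2
  have hta : a ≠ t := ne_of_mul_ne_zero_of_mul_eq_zero hpa hpt
  have htna : -a ≠ t := fun h => hpa (by linear_combination -hpt - p * h)
  exact mul_ne_zero_of_cliqueFree hT ha0 (neg_ne_zero.mpr ha0) ht0
    (fun h => h2 (by linear_combination h)) hta htna (by linear_combination -ha2) hat
    (by linear_combination -hat)

lemma mul_eq_self_of_mul_ne_zero (hT : (zdGraph R).CliqueFree 3) (ha0 : a ≠ 0)
    (ha2 : a * a = 0) (hchar : a + a = 0) {v : R} (hva : v * a ≠ 0) : v * a = a := by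
  rcases mul_eq_or_eq_neg_of_mul_ne_zero hT ha0 ha2 hva with h | h
  · exact h
  · linear_combination h - hchar

lemma eq_zero_or_eq_of_mul_self_eq_zero (hT : (zdGraph R).CliqueFree 3) (ha0 : a ≠ 0)
    (ha2 : a * a = 0) (hchar : a + a = 0) {n : R} (hn2 : n * n = 0) : n = 0 ∨ n = a := by
  refine or_iff_not_imp_left.mpr fun hn0 => ?_
  have hna : a * n = 0 := by
    by_contra hna
    have hna' : n * a = a := mul_eq_self_of_mul_ne_zero hT ha0 ha2 hchar (by rwa [mul_comm])
    -- `a = n * (n * a) = (n * n) * a = 0`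
    exact ha0 (by linear_combination a * hn2 - (n + 1) * hna')
  rcases eq_or_eq_neg_of_mul_self_eq_zero hT ha0 ha2 hn0 hn2 hna with h | h
  · exact h
  · linear_combination h - hchar

lemma exists_common_annihilator (hT : (zdGraph R).CliqueFree 3) (ha0 : a ≠ 0)
    (ha2 : a * a = 0) {v v' : R} (hv : v ∈ zdVerts R) (hv' : v' ∈ zdVerts R)
    (hva : v * a ≠ 0) (hv'a : v' * a ≠ 0) :
    ∃ w ≠ 0, w * v = 0 ∧ w * v' = 0 ∧ w * a = 0 := by
  obtain ⟨-, t, ht0, hvt⟩ := hv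
  obtain ⟨-, t', ht'0, hv't'⟩ := hv'
  have hat := mul_eq_zero_of_mul_ne_zero hT ha0 ha2 hva hvt
  have hat' := mul_eq_zero_of_mul_ne_zero hT ha0 ha2 hv'a hv't'
  obtain rfl | htt' := eq_or_ne t t'
  · exact ⟨t, ht0, by rw [mul_comm, hvt], by rw [mul_comm, hv't'], by rw [mul_comm, hat]⟩
  refine ⟨t * t', ?_, by linear_combination t' * hvt, by linear_combination t * hv't',
    by linear_combination t' * hat⟩
  exact mul_ne_zero_of_cliqueFree hT ha0 ht0 ht'0 (ne_of_mul_ne_zero_of_mul_eq_zero hva hvt)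
    (ne_of_mul_ne_zero_of_mul_eq_zero hv'a hv't') htt' hat hat'

lemma eq_or_eq_add_of_mul_ne_zero (hT : (zdGraph R).CliqueFree 3) (ha0 : a ≠ 0)
    (ha2 : a * a = 0) (hchar : a + a = 0) {v v' : R} (hv : v ∈ zdVerts R)
    (hv' : v' ∈ zdVerts R) (hva : v * a ≠ 0) (hv'a : v' * a ≠ 0) : v = v' ∨ v = v' + a := by
  obtain ⟨w, hw0, hwv, hwv', hwa⟩ := exists_common_annihilator hT ha0 ha2 hv hv' hva hv'a
  have hda : (v - v') * a = 0 := by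
    rw [sub_mul, mul_eq_self_of_mul_ne_zero hT ha0 ha2 hchar hva,
      mul_eq_self_of_mul_ne_zero hT ha0 ha2 hchar hv'a, sub_self]
  have hwd : w * (v - v') = 0 := by linear_combination hwv - hwv'
  by_contra! h
  have hd0 : v - v' ≠ 0 := sub_ne_zero.mpr h.1
  have hda' : v - v' ≠ a := fun e => h.2 (by linear_combination e)
  obtain rfl | hwd' := eq_or_ne w (v - v')
  · rcases eq_zero_or_eq_of_mul_self_eq_zero hT ha0 ha2 hchar hwd with e | e
    exacts [hd0 e, hda' e]
  · have hwa' : a ≠ w := ne_of_mul_ne_zero_of_mul_eq_zero hva (by rw [mul_comm, hwv])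
    exact mul_ne_zero_of_cliqueFree hT hw0 hd0 ha0 hwd' hwa'.symm hda' hwd hwa hda

lemma exists_isTotDomSet_pair_of_mul_self_eq_zero (hT : (zdGraph R).CliqueFree 3)
    (ha0 : a ≠ 0) (ha2 : a * a = 0) (hND : ∃ v ∈ zdVerts R, a * v ≠ 0) :
    ∃ b, IsTotDomSet R {a, b} := by
  have hchar := add_self_eq_zero_of_mul_self_eq_zero hT ha0 ha2 hND
  obtain ⟨v₀, hv₀, hav₀⟩ := hND
  have hv₀a : v₀ * a ≠ 0 := by rwa [mul_comm]
  obtain ⟨-, t₀, ht₀, hv₀t₀⟩ := id hv₀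
  have hat₀ := mul_eq_zero_of_mul_ne_zero hT ha0 ha2 hv₀a hv₀t₀
  refine ⟨t₀, isTotDomSet_pair ⟨ha0, a, ha0, ha2⟩ ⟨ht₀, a, ha0, by rw [mul_comm, hat₀]⟩
    fun v hv => or_iff_not_imp_left.mpr fun hav => ?_⟩
  rcases eq_or_eq_add_of_mul_ne_zero hT ha0 ha2 hchar hv hv₀ (by rwa [mul_comm]) hv₀a
    with rfl | rfl
  · rw [mul_comm, hv₀t₀]
  · linear_combination hv₀t₀ + hat₀

end SquareZero

lemma exists_isTotDomSet_pair {R : Type*} [CommRing R] (hT : (zdGraph R).CliqueFree 3)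
    (hV : (zdVerts R).Nonempty) (hND : ∀ x ∈ zdVerts R, ∃ v ∈ zdVerts R, v ≠ x ∧ x * v ≠ 0) :
    ∃ a b : R, IsTotDomSet R {a, b} := by
  by_cases hsq : ∃ a : R, a ≠ 0 ∧ a * a = 0
  · obtain ⟨a, ha0, ha2⟩ := hsq
    obtain ⟨v, hv, -, hav⟩ := hND a ⟨ha0, a, ha0, ha2⟩
    exact ⟨a, exists_isTotDomSet_pair_of_mul_self_eq_zero hT ha0 ha2 ⟨v, hv, hav⟩⟩
  · push Not at hsq
    obtain ⟨x, hx0, y, hy0, hxy⟩ := hV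
    exact ⟨x, y, isTotDomSet_pair ⟨hx0, y, hy0, hxy⟩ ⟨hy0, x, hx0, by rw [mul_comm, hxy]⟩
      fun v hv => mul_eq_zero_or_mul_eq_zero_of_forall_mul_self_ne_zero hT hsq hxy hv⟩

lemma IsIdempotentElem.mem_span_singleton_iff {R : Type*} [CommRing R] {e : R}
    (he : IsIdempotentElem e) {r : R} : r ∈ Ideal.span {e} ↔ r * (1 - e) = 0 := by
  rw [← he.ker_toSpanSingleton_one_sub_eq_span]
  simp

lemma nonempty_ringEquiv_zmod_two {Q : Type*} [Ring Q] [Nontrivial Q]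
    (h : ∀ q : Q, q = 0 ∨ q = 1) : Nonempty (Q ≃+* ZMod 2) := by
  have hcard : Nat.card Q = 2 := Nat.card_eq_two_iff.mpr ⟨0, 1, zero_ne_one, by
    ext q; simpa [or_comm] using h q⟩
  have : Finite Q := Nat.finite_of_card_ne_zero (by rw [hcard]; norm_num)
  have := Fintype.ofFinite Q
  exact ⟨(ZMod.ringEquivOfPrime Q Nat.prime_two (by rw [Fintype.card_eq_nat_card, hcard])).symm⟩

lemma exists_ringEquiv_zmod_two_prod {R : Type u} [CommRing R] {e : R}
    (he : IsIdempotentElem e) (he0 : e ≠ 0) (hcorner : ∀ r : R, r * e = 0 ∨ r * e = e)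
    (hprime : (Ideal.span {e}).IsPrime) :
    ∃ (D : Type u) (_ : CommRing D) (_ : IsDomain D), Nonempty (R ≃+* ZMod 2 × D) := by
  have hbij := RingHom.prod_bijective_of_isIdempotentElem he.one_sub he (sub_add_cancel 1 e)
    (by rw [sub_mul, one_mul, he.eq, sub_self])
  have : Nontrivial (R ⧸ Ideal.span {1 - e}) := Ideal.Quotient.nontrivial_iff.mpr fun htop =>
    he0 ((Ideal.span_singleton_eq_top.mp htop).mul_right_eq_zero.mp
      (by rw [sub_mul, one_mul, he.eq, sub_self]))
  -- `R ⧸ (1 - e)` is a copy of `eR = {0, e}`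
  obtain ⟨φ⟩ := nonempty_ringEquiv_zmod_two fun q : R ⧸ Ideal.span {1 - e} => by
    obtain ⟨r, rfl⟩ := Ideal.Quotient.mk_surjective q
    have hr : Ideal.Quotient.mk (Ideal.span {1 - e}) r = Ideal.Quotient.mk _ (r * e) :=
      Ideal.Quotient.eq.mpr (Ideal.mem_span_singleton.mpr ⟨r, by ring⟩)
    rcases hcorner r with h | h <;> rw [hr, h]
    · exact Or.inl (map_zero _)
    · exact Or.inr (Ideal.Quotient.eq.mpr (Ideal.mem_span_singleton.mpr ⟨-1, by ring⟩))
  exact ⟨R ⧸ Ideal.span {e}, inferInstance, inferInstance,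
    ⟨(RingEquiv.ofBijective _ hbij).trans (φ.prodCongr (RingEquiv.refl _))⟩⟩

section DominatingVertex

variable {R : Type*} [CommRing R] {e : R}

lemma mul_eq_zero_or_eq_or_of_dominating (he : e ∈ zdVerts R)
    (hdom : ∀ v ∈ zdVerts R, v ≠ e → e * v = 0) (r : R) :
    r * e = 0 ∨ r * e = e ∨ e * (r * e) = 0 := by
  obtain ⟨-, y, hy0, hey⟩ := he
  by_cases h0 : r * e = 0
  · exact Or.inl h0
  by_cases h1 : r * e = e
  · exact Or.inr (Or.inl h1)
  exact Or.inr (Or.inr (hdom _ ⟨h0, y, hy0, by linear_combination r * hey⟩ h1))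

lemma isIdempotentElem_of_dominating (he : e ∈ zdVerts R)
    (hdom : ∀ v ∈ zdVerts R, v ≠ e → e * v = 0) (he2 : e * e ≠ 0) : IsIdempotentElem e := by
  rcases mul_eq_zero_or_eq_or_of_dominating he hdom e with h | h | h
  · exact absurd h he2
  · exact h
  -- now `e³ = 0`, and `(1 + e) * e = e + e²` fits none of the three alternatives
  exfalso
  rcases mul_eq_zero_or_eq_or_of_dominating he hdom (1 + e) with h' | h' | h' <;> apply he2
  · linear_combination e * h' - h
  · linear_combination h'
  · linear_combination h' - h

lemma mul_eq_zero_or_eq_of_dominating (he : e ∈ zdVerts R)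
    (hdom : ∀ v ∈ zdVerts R, v ≠ e → e * v = 0) (he2 : e * e ≠ 0) (r : R) :
    r * e = 0 ∨ r * e = e := by
  have hidem := (isIdempotentElem_of_dominating he hdom he2).eq
  rcases mul_eq_zero_or_eq_or_of_dominating he hdom r with h | h | h
  · exact Or.inl h
  · exact Or.inr h
  · exact Or.inl (by linear_combination h - r * hidem)

lemma mul_self_ne_zero_of_dominating (hdom : ∀ v ∈ zdVerts R, v ≠ e → e * v = 0)
    (he2 : e * e ≠ 0) {x : R} (hx0 : x ≠ 0) (hex : e * x = 0) : x * x ≠ 0 := by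
  intro hx2
  have hxe0 : x + e ≠ 0 := fun h => he2 (by linear_combination e * h - hex)
  have hxe : e * (x + e) = 0 :=
    hdom _ ⟨hxe0, x, hx0, by linear_combination hx2 + hex⟩ fun h => hx0 (by linear_combination h)
  exact he2 (by linear_combination hxe - hex)

lemma isPrime_span_of_dominating (hT : (zdGraph R).CliqueFree 3) (he : e ∈ zdVerts R)
    (hdom : ∀ v ∈ zdVerts R, v ≠ e → e * v = 0) (he2 : e * e ≠ 0) :
    (Ideal.span {e}).IsPrime := by
  have hidem := isIdempotentElem_of_dominating he hdom he2
  obtain ⟨he0, y, hy0, hey⟩ := id he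
  refine Ideal.isPrime_iff.mpr ⟨fun htop => hy0 ?_, fun {u v} huv => ?_⟩
  · have h1 := hidem.mem_span_singleton_iff.mp (htop ▸ Submodule.mem_top : (1 : R) ∈ _)
    linear_combination y * h1 + hey
  simp only [hidem.mem_span_singleton_iff] at huv ⊢
  by_contra! h
  have heu : e * (u * (1 - e)) = 0 := by linear_combination (-u) * hidem.eq
  have hev : e * (v * (1 - e)) = 0 := by linear_combination (-v) * hidem.eq
  have huv' : (u * (1 - e)) * (v * (1 - e)) = 0 := by linear_combination (1 - e) * huv
  obtain huv_eq | huv_ne := eq_or_ne (u * (1 - e)) (v * (1 - e))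
  · exact mul_self_ne_zero_of_dominating hdom he2 h.1 heu (by rwa [← huv_eq] at huv')
  · exact mul_ne_zero_of_cliqueFree hT he0 h.1 h.2 (ne_of_mul_ne_zero_of_mul_eq_zero he2 heu)
      (ne_of_mul_ne_zero_of_mul_eq_zero he2 hev) huv_ne heu hev huv'

end DominatingVertex

lemma exists_ringEquiv_of_dominating {R : Type u} [CommRing R] (hT : (zdGraph R).CliqueFree 3)
    {e : R} (he : e ∈ zdVerts R) (hdom : ∀ v ∈ zdVerts R, v ≠ e → e * v = 0)
    (he2 : e * e ≠ 0) :
    ∃ (D : Type u) (_ : CommRing D) (_ : IsDomain D), Nonempty (R ≃+* ZMod 2 × D) :=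
  exists_ringEquiv_zmod_two_prod (isIdempotentElem_of_dominating he hdom he2) he.1
    (mul_eq_zero_or_eq_of_dominating he hdom he2) (isPrime_span_of_dominating hT he hdom he2)

theorem stmt_10 (R : Type u) [CommRing R]
    (h : (zdGraph R).egirth = 4 ∨ (zdGraph R).egirth = ⊤) :
    totDomNum R = domNum R ∨
      ∃ (D : Type u) (_ : CommRing D) (_ : IsDomain D), Nonempty (R ≃+* ZMod 2 × D) := by
  have hT : (zdGraph R).CliqueFree 3 :=
    SimpleGraph.cliqueFree_three_of_three_lt_egirth (by rcases h with h | h <;> rw [h] <;> decide)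
  obtain hV | hV := (zdVerts R).eq_empty_or_nonempty
  · exact Or.inl (totDomNum_eq_domNum_of_zdVerts_eq_empty hV)
  by_cases hdom : ∃ x ∈ zdVerts R, ∀ v ∈ zdVerts R, v ≠ x → x * v = 0
  · obtain ⟨x, hx, hdom⟩ := hdom
    by_cases hx2 : x * x = 0
    · exact Or.inl (totDomNum_eq_domNum_of_mul_self_eq_zero hx hdom hx2)
    · exact Or.inr (exists_ringEquiv_of_dominating hT hx hdom hx2)
  · push Not at hdom
    obtain ⟨a, b, hab⟩ := exists_isTotDomSet_pair hT hV hdom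
    exact Or.inl (totDomNum_eq_domNum_of_isTotDomSet_pair hab hdom)
end
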